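/- arXiv:2401.12394 — 4 statements merged into one kernel-verified Lean document; each statement's English description precedes it below -/
import Mathlib

section
/- Let n ≥ 1 and let ζ = exp(2πi/n) ∈ ℂ. For t, s ∈ ℂ with |t| = |s| = 1, and for every index j ≥ 1, the j-th coefficients of the real polynomials f_t and f_s coincide: (f_t).coeff j = (f_s).coeff j. In other words, all coefficients of f_t except the constant term are independent of the rotation parameter t. -/
/-!
Substitute `x = (w + w⁻¹) / 2`. For `‖v‖ = 1` the factor `x - Re v` splits as
`(w - v) (w - v̄) / (2w)`, and `∏ₖ (w - a ζᵏ) = wⁿ - aⁿ` for a primitive `n`-th root `ζ`, so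
`f_t(x) = (wⁿ + w⁻ⁿ - 2 Re tⁿ) / 2ⁿ`: up to the constant `2 Re tⁿ / 2ⁿ`, `f_t` is the scaled
Chebyshev polynomial `2¹⁻ⁿ Tₙ`, whatever `t` is.
-/

open Polynomial Finset ComplexConjugate

theorem IsPrimitiveRoot.prod_range_sub_pow_mul {R : Type*} [CommRing R] [IsDomain R] {μ : R}
    {n : ℕ} (hμ : IsPrimitiveRoot μ n) (hn : 0 < n) (w a : R) :
    ∏ k ∈ range n, (w - μ ^ k * a) = w ^ n - a ^ n := by
  simpa [eval_prod] using (congrArg (eval w) (X_pow_sub_C_eq_prod hμ hn rfl)).symm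

theorem joukowski_sub_re_eq {v : ℂ} (hv : ‖v‖ = 1) {w : ℂ} (hw : w ≠ 0) :
    (w + w⁻¹) / 2 - v.re = (w - v) * (w - conj v) / (2 * w) := by
  have hvv : v * conj v = 1 := by rw [Complex.mul_conj', hv]; norm_num
  rw [Complex.re_eq_add_conj]
  field_simp
  linear_combination -hvv

theorem prod_joukowski_sub_re {n : ℕ} (hn : 0 < n) {ζ : ℂ} (hζ : IsPrimitiveRoot ζ n)
    {u : ℂ} (hu : ‖u‖ = 1) {w : ℂ} (hw : w ≠ 0) :
    ∏ k ∈ range n, ((w + w⁻¹) / 2 - (u * ζ ^ k).re) =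
      2 * ((w ^ n + w⁻¹ ^ n) / 2 - (u ^ n).re) / 2 ^ n := by
  have hζu : ∀ k, ‖u * ζ ^ k‖ = 1 := by simp [hu, hζ.norm'_eq_one hn.ne']
  have huu : u ^ n * conj u ^ n = 1 := by
    rw [← mul_pow, Complex.mul_conj', hu]; norm_num
  have hζc : IsPrimitiveRoot (conj ζ) n := hζ.map_of_injective (RingHom.injective _)
  calc ∏ k ∈ range n, ((w + w⁻¹) / 2 - (u * ζ ^ k).re)
      = ∏ k ∈ range n, ((w - ζ ^ k * u) * (w - conj ζ ^ k * conj u) / (2 * w)) := by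
        refine prod_congr rfl fun k _ => ?_
        rw [joukowski_sub_re_eq (hζu k) hw, map_mul, map_pow]
        ring
    _ = (w ^ n - u ^ n) * (w ^ n - conj u ^ n) / (2 * w) ^ n := by
        rw [prod_div_distrib, prod_mul_distrib, prod_const, card_range,
          hζ.prod_range_sub_pow_mul hn, hζc.prod_range_sub_pow_mul hn]
    _ = 2 * ((w ^ n + w⁻¹ ^ n) / 2 - (u ^ n).re) / 2 ^ n := by
        have hww : w ^ n * w⁻¹ ^ n = 1 := by rw [← mul_pow, mul_inv_cancel₀ hw, one_pow]
        rw [Complex.re_eq_add_conj, map_pow]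
        field_simp
        linear_combination (2 : ℂ) ^ n * huu - (2 : ℂ) ^ n * hww

theorem Complex.exists_ne_zero_joukowski_eq (x : ℂ) : ∃ w ≠ 0, (w + w⁻¹) / 2 = x := by
  obtain ⟨r, hr⟩ := IsAlgClosed.exists_pow_nat_eq (x ^ 2 - 1) two_pos
  have hinv : (x + r) * (x - r) = 1 := by linear_combination -hr
  refine ⟨x + r, left_ne_zero_of_mul_eq_one hinv, ?_⟩
  rw [inv_eq_of_mul_eq_one_right hinv]
  ring

theorem prod_sub_re_add_C_eq {n : ℕ} (hn : 0 < n) {ζ : ℂ} (hζ : IsPrimitiveRoot ζ n)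
    {u v : ℂ} (hu : ‖u‖ = 1) (hv : ‖v‖ = 1) :
    ∏ k ∈ range n, (X - C (u * ζ ^ k).re) + C (2 * (u ^ n).re / 2 ^ n) =
      ∏ k ∈ range n, (X - C (v * ζ ^ k).re) + C (2 * (v ^ n).re / 2 ^ n) := by
  refine Polynomial.funext fun x => Complex.ofReal_injective ?_
  obtain ⟨w, hw, hx⟩ := Complex.exists_ne_zero_joukowski_eq x
  have eval_eq : ∀ u : ℂ, ‖u‖ = 1 →
      ((eval x (∏ k ∈ range n, (X - C (u * ζ ^ k).re) + C (2 * (u ^ n).re / 2 ^ n)) : ℝ) : ℂ) =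
        (w ^ n + w⁻¹ ^ n) / 2 ^ n := by
    intro u hu
    simp only [eval_add, eval_prod, eval_sub, eval_X, eval_C]
    push_cast
    rw [← hx, prod_joukowski_sub_re hn hζ hu hw]
    ring
  rw [eval_eq u hu, eval_eq v hv]

theorem coeff_rotation_invariant_general (n : ℕ)
    (ζ : ℂ) (hζ : ζ = Complex.exp (2 * Real.pi * Complex.I / n))
    (t s : ℂ) (ht : ‖t‖ = 1) (hs : ‖s‖ = 1)
    (j : ℕ) (hj : 1 ≤ j) :
    (∏ k ∈ Finset.range n, (X - C (Complex.re (t * ζ ^ k)))).coeff j =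
      (∏ k ∈ Finset.range n, (X - C (Complex.re (s * ζ ^ k)))).coeff j := by
  obtain rfl | hn := n.eq_zero_or_pos
  · simp
  have hprim : IsPrimitiveRoot ζ n := hζ ▸ Complex.isPrimitiveRoot_exp n hn.ne'
  have := congrArg (coeff · j) (prod_sub_re_add_C_eq hn hprim ht hs)
  simpa only [coeff_add, coeff_C, if_neg (Nat.one_le_iff_ne_zero.mp hj), add_zero] using this

/-- All coefficients of `f_t` except the constant term are independent of the
rotation parameter `t` on the unit circle. -/
theorem coeff_rotation_invariant (n : ℕ) (hn : 1 ≤ n)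
    (ζ : ℂ) (hζ : ζ = Complex.exp (2 * Real.pi * Complex.I / n))
    (t s : ℂ) (ht : ‖t‖ = 1) (hs : ‖s‖ = 1)
    (j : ℕ) (hj : 1 ≤ j) :
    (∏ k ∈ Finset.range n, (X - C (Complex.re (t * ζ ^ k)))).coeff j =
      (∏ k ∈ Finset.range n, (X - C (Complex.re (s * ζ ^ k)))).coeff j :=
  coeff_rotation_invariant_general n ζ hζ t s ht hs j hj
end

section
/- Let n ≥ 1, let ζ = exp(2πi/n) ∈ ℂ, and let t ∈ ℂ with |t| = 1. For every index k with 1 ≤ k ≤ n − 1 such that k and n have different parity (k ≢ n mod 2), the coefficient of x^k in f_t is zero: (f_t).coeff k = 0. In particular the coefficients of x^(n−1), x^(n−3), x^(n−5), … all vanish (excluding the constant term when n is odd). -/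
/-!
If `|w| = 1` and `u ≠ 0`, then `(u - w) (u - w̄) = u (u + u⁻¹ - 2 Re w)`. Taking the product
over the vertices `w = t ζ^i` and using `∏ (u - ζ^i t) = u^n - t^n` (and the same for `t̄`) gives
`∏ (u + u⁻¹ - 2 Re (t ζ^i)) = u^n + u⁻ⁿ - 2 Re (t^n)`. With `u = exp (iθ)` this is
`2^n f_t (cos θ) = 2 cos (nθ) - 2 Re (t^n)`, i.e. `2^n f_t = 2 (T_n - Re (t^n))` for the Chebyshev
polynomial `T_n`. Since `T_n (-x) = (-1)^n T_n (x)`, only monomials of the parity of `n` occur in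
`T_n`, so every coefficient of `f_t` of the other parity vanishes except possibly the constant one.
-/

open Polynomial Finset

section

open ComplexConjugate Complex

theorem Polynomial.coeff_comp_neg_X {R : Type*} [CommRing R] (p : R[X]) (k : ℕ) :
    (p.comp (-X)).coeff k = (-1) ^ k * p.coeff k := by
  rw [← neg_one_mul (X : R[X]), ← C_1, ← C_neg, comp_C_mul_X_coeff, mul_comm]

theorem Polynomial.coeff_eq_zero_of_comp_neg_X_eq {R : Type*} [CommRing R] [NoZeroDivisors R]
    [CharZero R] {p : R[X]} {n k : ℕ} (hp : p.comp (-X) = (-1) ^ n * p) (h : Odd (n + k)) :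
    p.coeff k = 0 := by
  have hk := congrArg (coeff · k) hp
  simp only [coeff_comp_neg_X, ← C_1, ← C_neg, ← C_pow, coeff_C_mul] at hk
  have hodd : (-1 : R) ^ (n + k) = -1 := h.neg_one_pow
  have heven : (-1 : R) ^ (n + n) = 1 := Even.neg_one_pow ⟨n, rfl⟩
  refine self_eq_neg.mp ?_
  linear_combination (-(-1) ^ n) * hk + p.coeff k * hodd - p.coeff k * heven

theorem Polynomial.Chebyshev.T_comp_neg_X {R : Type*} [CommRing R] [IsDomain R] [Infinite R]
    (n : ℕ) : (T R n).comp (-X) = (-1) ^ n * T R n :=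
  Polynomial.funext fun x => by simp [T_eval_neg]

theorem Polynomial.Chebyshev.coeff_T_eq_zero_of_odd_add {R : Type*} [CommRing R] [IsDomain R]
    [CharZero R] {n k : ℕ} (h : Odd (n + k)) : (T R n).coeff k = 0 :=
  coeff_eq_zero_of_comp_neg_X_eq (T_comp_neg_X n) h

theorem IsPrimitiveRoot.prod_sub_pow_mul {R : Type*} [CommRing R] [IsDomain R] {ζ : R} {n : ℕ}
    (hζ : IsPrimitiveRoot ζ n) (hn : 0 < n) (z α : R) :
    ∏ i ∈ range n, (z - ζ ^ i * α) = z ^ n - α ^ n := by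
  simpa [eval_prod] using congrArg (eval z) (X_pow_sub_C_eq_prod hζ hn rfl).symm

theorem Complex.sub_mul_sub_conj {w : ℂ} (hw : ‖w‖ = 1) {u : ℂ} (hu : u ≠ 0) :
    (u - w) * (u - conj w) = u * (u + u⁻¹ - 2 * w.re) := by
  have hw' : w * conj w = 1 := by rw [mul_conj, normSq_eq_norm_sq, hw]; norm_num
  have hre : (2 * w.re : ℂ) = w + conj w := by rw [add_conj]; push_cast; ring
  rw [hre]
  linear_combination hw' - mul_inv_cancel₀ hu

theorem IsPrimitiveRoot.prod_add_inv_sub_two_mul_re {ζ : ℂ} {n : ℕ} (hζ : IsPrimitiveRoot ζ n)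
    (hn : 0 < n) {t : ℂ} (ht : ‖t‖ = 1) {u : ℂ} (hu : u ≠ 0) :
    ∏ i ∈ range n, (u + u⁻¹ - 2 * (t * ζ ^ i).re) = u ^ n + u⁻¹ ^ n - 2 * (t ^ n).re := by
  have hζ' : IsPrimitiveRoot (conj ζ) n := hζ.map_of_injective (RingHom.injective _)
  have hw (i : ℕ) : ‖t * ζ ^ i‖ = 1 := by simp [ht, hζ.norm'_eq_one hn.ne']
  have htn : t ^ n * conj t ^ n = 1 := by
    rw [← map_pow, mul_conj, normSq_eq_norm_sq, norm_pow, ht]; norm_num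
  have hprod : u ^ n * ∏ i ∈ range n, (u + u⁻¹ - 2 * (t * ζ ^ i).re)
      = (u ^ n - t ^ n) * (u ^ n - conj t ^ n) := calc
    _ = ∏ i ∈ range n, (u - ζ ^ i * t) * (u - conj ζ ^ i * conj t) := by
      rw [pow_eq_prod_const, ← prod_mul_distrib]
      refine prod_congr rfl fun i _ => ?_
      rw [← sub_mul_sub_conj (hw i) hu, map_mul, map_pow]
      ring
    _ = (u ^ n - t ^ n) * (u ^ n - conj t ^ n) := by
      rw [prod_mul_distrib, hζ.prod_sub_pow_mul hn, hζ'.prod_sub_pow_mul hn]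
  have hre : (2 * (t ^ n).re : ℂ) = t ^ n + conj t ^ n := by
    rw [← map_pow, add_conj]; push_cast; ring
  refine mul_left_cancel₀ (pow_ne_zero n hu) ?_
  rw [hprod, hre, inv_pow]
  linear_combination htn - mul_inv_cancel₀ (pow_ne_zero n hu)

theorem IsPrimitiveRoot.C_two_pow_mul_prod_X_sub_re {ζ : ℂ} {n : ℕ} (hζ : IsPrimitiveRoot ζ n)
    (hn : 0 < n) {t : ℂ} (ht : ‖t‖ = 1) :
    C (2 ^ n) * ∏ i ∈ range n, (X - C (t * ζ ^ i).re) = 2 * (Chebyshev.T ℝ n - C (t ^ n).re) := by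
  refine Polynomial.funext fun x => ofReal_injective ?_
  obtain ⟨θ, hθ⟩ := cos_surjective x
  have hcos (m : ℕ) : 2 * cos (m * θ) = cexp (θ * I) ^ m + (cexp (θ * I))⁻¹ ^ m := by
    rw [cos, ← exp_neg, ← exp_nat_mul, ← exp_nat_mul]
    ring_nf
  have hcos_one : cexp (θ * I) + (cexp (θ * I))⁻¹ = 2 * cos θ := by simpa using (hcos 1).symm
  have key := hζ.prod_add_inv_sub_two_mul_re hn ht (exp_ne_zero (θ * I))
  rw [← hcos, hcos_one] at key
  simp only [← mul_sub, prod_mul_distrib, prod_const, card_range] at key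
  simp only [eval_mul, eval_sub, eval_prod, eval_X, eval_C, eval_ofNat]
  push_cast
  rw [← hθ, Chebyshev.T_complex_cos]
  exact_mod_cast key

end

theorem coeff_ne_parity_eq_zero_general (n : ℕ) (hn : 1 ≤ n)
    (ζ : ℂ) (hζ : ζ = Complex.exp (2 * Real.pi * Complex.I / n))
    (t : ℂ) (ht : ‖t‖ = 1)
    (k : ℕ) (hk1 : 1 ≤ k) (hpar : k % 2 ≠ n % 2) :
    (∏ i ∈ Finset.range n, (X - C (Complex.re (t * ζ ^ i)))).coeff k = 0 := by
  have hprim : IsPrimitiveRoot ζ n := hζ ▸ Complex.isPrimitiveRoot_exp n (by omega)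
  have hT : (Chebyshev.T ℝ n).coeff k = 0 :=
    Chebyshev.coeff_T_eq_zero_of_odd_add (by rw [Nat.odd_iff]; omega)
  have hcoeff := congrArg (coeff · k) (hprim.C_two_pow_mul_prod_X_sub_re hn ht)
  simp only [coeff_C_mul, coeff_ofNat_mul, coeff_sub, hT, coeff_C, if_neg (show k ≠ 0 by omega),
    sub_zero, mul_zero] at hcoeff
  exact (mul_eq_zero.mp hcoeff).resolve_left (by positivity)

/-- All coefficients of `f_t` whose index has parity different from `n`
(and index between `1` and `n-1`) vanish. -/
theorem coeff_ne_parity_eq_zero (n : ℕ) (hn : 1 ≤ n)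
    (ζ : ℂ) (hζ : ζ = Complex.exp (2 * Real.pi * Complex.I / n))
    (t : ℂ) (ht : ‖t‖ = 1)
    (k : ℕ) (hk1 : 1 ≤ k) (hk2 : k ≤ n - 1) (hpar : k % 2 ≠ n % 2) :
    (∏ i ∈ Finset.range n, (X - C (Complex.re (t * ζ ^ i)))).coeff k = 0 :=
  coeff_ne_parity_eq_zero_general n hn ζ hζ t ht k hk1 hpar
end

section
/- Let n ≥ 2, let ζ = exp(2πi/n) ∈ ℂ, and let t ∈ ℂ with |t| = 1. Then the derivative of f_t factors as derivative f_t = C (n : ℝ) * ∏_{k=1}^{n-1} (X − C (cos(π·k/n))). In particular, the roots of f_t′ are exactly the numbers cos(π·k/n), k = 1, …, n−1, and they do not depend on t; these roots occur in pairs ±cos(π·j/n), so the vertical lines through them are tangent to the circles centered at the center of the n-gon tangent to its diagonals. -/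
open Polynomial Finset Real

/-!
For `x = Re z` with `‖z‖ = 1` and a vertex `w` on the unit circle,
`x - Re w = (z - w)(1 - z⁻¹w⁻¹)/2`; over the vertices `w = tζ^k` both products collapse by
`∏ (a - bζ^k) = aⁿ - bⁿ`, giving `f_t(Re z) = (Re zⁿ - Re tⁿ)/2ⁿ⁻¹`. So `f_t = (Tₙ - Re tⁿ)/2ⁿ⁻¹`
with `Tₙ` the Chebyshev polynomial, and `f_t' = n Uₙ₋₁/2ⁿ⁻¹`, whose roots are the `cos (πk/n)`.
-/

theorem IsPrimitiveRoot.prod_sub_mul_pow {R : Type*} [CommRing R] [IsDomain R] {ζ : R} {n : ℕ}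
    (hζ : IsPrimitiveRoot ζ n) (hn : 0 < n) (a b : R) :
    ∏ k ∈ range n, (a - b * ζ ^ k) = a ^ n - b ^ n := by
  simpa [eval_prod, mul_comm] using (congrArg (eval a) (X_pow_sub_C_eq_prod hζ hn rfl)).symm

theorem Complex.ofReal_re_sub_re {z w : ℂ} (hz : ‖z‖ = 1) (hw : ‖w‖ = 1) :
    ((z.re - w.re : ℝ) : ℂ) = (z - w) * (1 - z⁻¹ * w⁻¹) / 2 := by
  have hz0 : z ≠ 0 := norm_ne_zero_iff.mp (by simp [hz])
  have hw0 : w ≠ 0 := norm_ne_zero_iff.mp (by simp [hw])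
  rw [Complex.ofReal_sub, Complex.re_eq_add_conj, Complex.re_eq_add_conj,
    ← RCLike.inv_eq_conj hz, ← RCLike.inv_eq_conj hw]
  field_simp
  ring

theorem prod_re_sub_re_mul_pow {n : ℕ} (hn : 0 < n) {ζ : ℂ} (hζ : IsPrimitiveRoot ζ n)
    {z t : ℂ} (hz : ‖z‖ = 1) (ht : ‖t‖ = 1) :
    ∏ k ∈ range n, (z.re - (t * ζ ^ k).re) = ((z ^ n).re - (t ^ n).re) / 2 ^ (n - 1) := by
  have hζ1 : ‖ζ‖ = 1 := hζ.norm'_eq_one hn.ne'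
  -- `(tζ^k)⁻¹ = t⁻¹ (ζ⁻¹)^k`, and `ζ⁻¹` is again a primitive `n`-th root of unity
  have hfactor : ∀ k ∈ range n, ((z.re - (t * ζ ^ k).re : ℝ) : ℂ) =
      (z - t * ζ ^ k) * (1 - z⁻¹ * t⁻¹ * ζ⁻¹ ^ k) / 2 := fun k _ => by
    rw [Complex.ofReal_re_sub_re hz (by simp [ht, hζ1]), mul_inv, inv_pow, mul_assoc]
  apply Complex.ofReal_injective
  rw [Complex.ofReal_prod, prod_congr rfl hfactor, prod_div_distrib, prod_mul_distrib,
    hζ.prod_sub_mul_pow hn, hζ.inv.prod_sub_mul_pow hn, prod_const, card_range,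
    Complex.ofReal_div, Complex.ofReal_re_sub_re (by simp [hz]) (by simp [ht])]
  rw [← Nat.sub_add_cancel hn]
  push_cast
  simp only [pow_succ, mul_pow, inv_pow]
  ring

theorem Polynomial.Chebyshev.U_real_eq_prod (m : ℕ) :
    U ℝ m = Polynomial.C (2 ^ m) *
      ∏ k ∈ range m, (X - Polynomial.C (cos ((k + 1) * π / (m + 1)))) := by
  have hroots : (U ℝ m).roots = (range m).val.map fun k : ℕ ↦ cos ((k + 1) * π / (m + 1)) := by
    rw [roots_U_real, Finset.image_val]
    exact Multiset.dedup_eq_self.mpr (roots_U_real_nodup m)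
  have hcard : Multiset.card (U ℝ m).roots = (U ℝ m).natDegree := by
    rw [hroots, Multiset.card_map, card_val, card_range, natDegree_U_natCast]
  rw [← C_leadingCoeff_mul_prod_multiset_X_sub_C hcard, leadingCoeff_U_natCast, hroots,
    Multiset.map_map]
  rfl

theorem prod_X_sub_C_re_eq_chebyshev_T {n : ℕ} (hn : 0 < n) {ζ : ℂ} (hζ : IsPrimitiveRoot ζ n)
    {t : ℂ} (ht : ‖t‖ = 1) :
    ∏ k ∈ range n, (X - C (t * ζ ^ k).re) =
      C ((2 : ℝ) ^ (n - 1))⁻¹ * (Chebyshev.T ℝ n - C (t ^ n).re) := by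
  refine eq_of_infinite_eval_eq _ _
    ((Set.Icc_infinite (by norm_num : (-1 : ℝ) < 1)).mono fun x hx => ?_)
  obtain ⟨hx₁, hx₂⟩ := hx
  set z := Complex.exp (arccos x * Complex.I)
  have hz : ‖z‖ = 1 := Complex.norm_exp_ofReal_mul_I _
  have hzn : z ^ n = Complex.exp ((n * arccos x : ℝ) * Complex.I) := by
    rw [← Complex.exp_nat_mul]
    push_cast
    ring_nf
  have hx : x = z.re := by rw [Complex.exp_ofReal_mul_I_re, cos_arccos hx₁ hx₂]
  simp only [Set.mem_ofPred_eq, eval_prod, eval_sub, eval_X, eval_C, eval_mul]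
  rw [hx, prod_re_sub_re_mul_pow hn hζ hz ht, Complex.exp_ofReal_mul_I_re, Chebyshev.T_real_cos,
    hzn, Complex.exp_ofReal_mul_I_re, div_eq_inv_mul]
  norm_cast

/-- The derivative of `f_t` factors as `n * ∏_{k=1}^{n-1} (X - cos (π k / n))`;
in particular its roots do not depend on `t`. -/
theorem derivative_factors (n : ℕ) (hn : 2 ≤ n)
    (ζ : ℂ) (hζ : ζ = Complex.exp (2 * Real.pi * Complex.I / n))
    (t : ℂ) (ht : ‖t‖ = 1) :
    derivative (∏ k ∈ Finset.range n, (X - C (Complex.re (t * ζ ^ k)))) =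
      C (n : ℝ) * ∏ k ∈ Finset.Icc 1 (n - 1), (X - C (Real.cos (Real.pi * k / n))) := by
  obtain ⟨m, rfl⟩ : ∃ m, n = m + 1 := ⟨n - 1, by omega⟩
  have hprim : IsPrimitiveRoot ζ (m + 1) := hζ ▸ Complex.isPrimitiveRoot_exp _ (by omega)
  have hT : derivative (Chebyshev.T ℝ (m + 1 : ℕ)) = (m + 1 : ℕ) * Chebyshev.U ℝ m := by
    simpa using Chebyshev.T_derivative_eq_U (R := ℝ) (m + 1)
  have hU : Chebyshev.U ℝ m =
      C (2 ^ m) * ∏ k ∈ Icc 1 m, (X - C (cos (π * k / (m + 1 : ℕ)))) := by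
    rw [Chebyshev.U_real_eq_prod, ← Ico_add_one_right_eq_Icc, prod_Ico_eq_prod_range]
    congr! 4 with k
    push_cast
    ring_nf
  rw [prod_X_sub_C_re_eq_chebyshev_T m.add_one_pos hprim ht, derivative_C_mul, derivative_sub,
    derivative_C, sub_zero, hT, hU, Nat.add_sub_cancel, ← C_eq_natCast, mul_left_comm,
    ← mul_assoc (C _⁻¹), ← C_mul, inv_mul_cancel₀ (by positivity), C_1, one_mul]
end

section
/- Let n ≥ 1 and let ζ = exp(2πi/n) ∈ ℂ. Fix k with 0 < k < n and j with 0 ≤ j ≤ k such that 2j ≠ k. Then the sum S = ∑_{A ⊆ {0,…,n−1}, |A| = k} ∑_{B ⊆ A, |B| = j} (∏_{i ∈ B} ζ^i) · (∏_{i ∈ A \ B} ζ^(−i)) equals 0. (Here each summand is the monomial (a_{i₁}⋯a_{i_j}) / (a_{i_{j+1}}⋯a_{i_k}) for the vertices a_i = ζ^i of a regular n-gon on the unit circle; the sum is invariant under multiplying each a_i by ζ, yet gets multiplied by ζ^(2j−k) ≠ 1, hence vanishes.) -/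
open Finset

/-- The sum over all `k`-subsets `A` of the vertex indices and all `j`-subsets
`B ⊆ A` of the monomials `(∏_{i ∈ B} a_i) / (∏_{i ∈ A \ B} a_i)`, with
`a_i = ζ^i` the vertices of a regular `n`-gon, vanishes when `2j ≠ k`. -/
theorem symmetric_sum_eq_zero (n : ℕ) (hn : 1 ≤ n)
    (ζ : ℂ) (hζ : ζ = Complex.exp (2 * Real.pi * Complex.I / n))
    (k : ℕ) (hk0 : 0 < k) (hkn : k < n)
    (j : ℕ) (hj : j ≤ k) (hjk : 2 * j ≠ k) :
    ∑ A ∈ Finset.powersetCard k (Finset.range n),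
      ∑ B ∈ Finset.powersetCard j A,
        (∏ i ∈ B, ζ ^ i) * (∏ i ∈ A \ B, ζ ^ (-(i : ℤ))) = 0 := by
  have hn0 : n ≠ 0 := by omega
  have hprim : IsPrimitiveRoot ζ n := hζ ▸ Complex.isPrimitiveRoot_exp n hn0
  have hζn : ζ ^ n = 1 := hprim.pow_eq_one
  have hζ0 : ζ ≠ 0 := by
    intro h
    rw [h, zero_pow hn0] at hζn
    exact zero_ne_one hζn
  -- the rotation map
  have hfinj : Function.Injective (fun i => if i = n - 1 then 0 else i + 1 : ℕ → ℕ) := by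
    intro a b hab
    simp only at hab
    split_ifs at hab <;> omega
  set e : ℕ ↪ ℕ := ⟨fun i => if i = n - 1 then 0 else i + 1, hfinj⟩ with he
  have hemem : ∀ i, i < n → e i < n := by
    intro i hi
    simp only [he, Function.Embedding.coeFn_mk]
    split_ifs <;> omega
  have hfr : (Finset.range n).map e = Finset.range n := by
    apply Finset.eq_of_subset_of_card_le
    · intro m hm
      simp only [Finset.mem_map, Finset.mem_range] at hm ⊢
      obtain ⟨i, hi, rfl⟩ := hm
      exact hemem i hi
    · rw [Finset.card_map]
  have hpow : ∀ i, i < n → ζ ^ (e i) = ζ * ζ ^ i := by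
    intro i hi
    simp only [he, Function.Embedding.coeFn_mk]
    split_ifs with h
    · rw [pow_zero]
      have h2 : ζ * ζ ^ i = ζ ^ n := by
        rw [← pow_succ']
        congr 1
        omega
      rw [h2, hζn]
    · rw [pow_succ']
  have hzpow : ∀ i, i < n → ζ ^ (-(e i : ℤ)) = ζ⁻¹ * ζ ^ (-(i : ℤ)) := by
    intro i hi
    rw [zpow_neg, zpow_neg, zpow_natCast, zpow_natCast, hpow i hi, mul_inv]
  set S := ∑ A ∈ Finset.powersetCard k (Finset.range n),
      ∑ B ∈ Finset.powersetCard j A,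
        (∏ i ∈ B, ζ ^ i) * (∏ i ∈ A \ B, ζ ^ (-(i : ℤ))) with hS
  set c : ℂ := ζ ^ j * (ζ⁻¹) ^ (k - j) with hc
  have key : S = c * S := by
    conv_lhs => rw [hS, ← hfr, Finset.powersetCard_map, Finset.sum_map]
    rw [hS, Finset.mul_sum]
    refine Finset.sum_congr rfl ?_
    intro A hA
    simp only [Finset.mem_powersetCard] at hA
    have hAr : ∀ i ∈ A, i < n := fun i hi => Finset.mem_range.mp (hA.1 hi)
    rw [RelEmbedding.coe_toEmbedding, Finset.mapEmbedding_apply,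
      Finset.powersetCard_map, Finset.sum_map, Finset.mul_sum]
    refine Finset.sum_congr rfl ?_
    intro B hB
    simp only [Finset.mem_powersetCard] at hB
    rw [RelEmbedding.coe_toEmbedding, Finset.mapEmbedding_apply]
    have hsd : A.map e \ B.map e = (A \ B).map e := by
      simp only [Finset.map_eq_image]
      exact (Finset.image_sdiff _ _ hfinj).symm
    rw [hsd, Finset.prod_map, Finset.prod_map]
    have h1 : ∏ i ∈ B, ζ ^ (e i) = ζ ^ j * ∏ i ∈ B, ζ ^ i := by
      rw [Finset.prod_congr rfl (fun i hi => hpow i (hAr i (hB.1 hi))),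
        Finset.prod_mul_distrib, Finset.prod_const, hB.2]
    have h2 : ∏ i ∈ A \ B, ζ ^ (-(e i : ℤ)) =
        (ζ⁻¹) ^ (k - j) * ∏ i ∈ A \ B, ζ ^ (-(i : ℤ)) := by
      rw [Finset.prod_congr rfl
          (fun i hi => hzpow i (hAr i (Finset.mem_sdiff.mp hi).1)),
        Finset.prod_mul_distrib, Finset.prod_const,
        Finset.card_sdiff_of_subset hB.1, hA.2, hB.2]
    rw [h1, h2, hc]
    ring
  -- c ≠ 1 since ζ is a primitive n-th root of unity and 0 < |2j - k| < n
  have hcz : c = ζ ^ (2 * (j : ℤ) - (k : ℤ)) := by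
    rw [hc, inv_pow, ← zpow_natCast ζ j, ← zpow_natCast ζ (k - j), ← zpow_neg,
      ← zpow_add₀ hζ0]
    congr 1
    omega
  have hcne : c ≠ 1 := by
    rw [hcz]
    intro hone
    have hdvd := (hprim.zpow_eq_one_iff_dvd _).mp hone
    have h1 : 2 * (j : ℤ) - (k : ℤ) < n := by omega
    have h2 : -(n : ℤ) < 2 * (j : ℤ) - (k : ℤ) := by omega
    have h3 : 2 * (j : ℤ) - (k : ℤ) ≠ 0 := by omega
    have h4 : (n : ℤ) ≤ |2 * (j : ℤ) - (k : ℤ)| :=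
      Int.le_of_dvd (abs_pos.mpr h3) ((dvd_abs _ _).mpr hdvd)
    have h5 : |2 * (j : ℤ) - (k : ℤ)| < n := abs_lt.mpr ⟨h2, h1⟩
    omega
  have hmul : S * (1 - c) = 0 := by
    linear_combination key
  rcases mul_eq_zero.mp hmul with h | h
  · exact h
  · exfalso
    apply hcne
    have : (1 : ℂ) - c = 0 := h
    linear_combination -this
end
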